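/- arXiv:2206.05716 — 11 statements merged into one kernel-verified Lean document; each statement's English description precedes it below -/
import Mathlib

section
/- The family C of ℕ∞-valued divergences on the cost-counting monad T = ℕ × (−) on Set, defined by C_I((i,x),(j,y)) = |i − j|, satisfies Top-unit-reflexivity (C_I(η x, η y) = 0 for all x, y ∈ I) and Top-composability: for all f, g : I → ℕ × J and (i,x), (j,y) ∈ ℕ × I, C_J(f♯(i,x), g♯(j,y)) ≤ C_I((i,x),(j,y)) + sup over (x',y') ∈ I × I of C_J(f x', g y'). -/
/-- Kleisli extension for the cost-counting monad `T I = ℕ × I` on `Set`. -/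
def costSharp {I J : Type*} (f : I → ℕ × J) (c : ℕ × I) : ℕ × J :=
  (c.1 + (f c.2).1, (f c.2).2)

/-- The divergence `C_I((i,x),(j,y)) = |i − j|` valued in `ℕ∞`. -/
def costC {I : Type*} (c d : ℕ × I) : ℕ∞ := (Nat.dist c.1 d.1 : ℕ∞)

theorem Nat.dist_add_add_le (a b c d : ℕ) : Nat.dist (a + b) (c + d) ≤ Nat.dist a c + Nat.dist b d :=
  calc Nat.dist (a + b) (c + d) ≤ Nat.dist (a + b) (c + b) + Nat.dist (c + b) (c + d) :=
        Nat.dist.triangle_inequality _ _ _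
    _ = Nat.dist a c + Nat.dist b d := by
        rw [Nat.dist_add_add_right, Nat.dist_add_add_left]

theorem costC_eq_zero_of_fst_eq {I : Type*} {c d : ℕ × I} (h : c.1 = d.1) : costC c d = 0 := by
  simp [costC, Nat.dist_eq_zero h]

theorem costC_costSharp_le {I J : Type*} (f g : I → ℕ × J) (c₁ c₂ : ℕ × I) :
    costC (costSharp f c₁) (costSharp g c₂) ≤ costC c₁ c₂ + costC (f c₁.2) (g c₂.2) := by
  simp only [costC, costSharp]
  exact_mod_cast Nat.dist_add_add_le _ _ _ _

theorem costC_top_unit_reflexive_and_composable {I J : Type*} :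
    (∀ x y : I, costC ((0, x) : ℕ × I) (0, y) = 0) ∧
    (∀ (f g : I → ℕ × J) (c₁ c₂ : ℕ × I),
      costC (costSharp f c₁) (costSharp g c₂) ≤
        costC c₁ c₂ + ⨆ p : I × I, costC (f p.1) (g p.2)) := by
  refine ⟨fun x y => costC_eq_zero_of_fst_eq rfl, fun f g c₁ c₂ => ?_⟩
  calc costC (costSharp f c₁) (costSharp g c₂) ≤ costC c₁ c₂ + costC (f c₁.2) (g c₂.2) :=
        costC_costSharp_le f g c₁ c₂
    _ ≤ costC c₁ c₂ + ⨆ p : I × I, costC (f p.1) (g p.2) :=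
        add_le_add_right (le_iSup (fun p : I × I => costC (f p.1) (g p.2)) (c₁.2, c₂.2)) _
end

section
/- The divergence C on the cost-counting monad ℕ × (−) on Set is not Eq-composable: there exist a set I, a function f : I → ℕ × J, and c₁, c₂ ∈ ℕ × I with C_I(c₁,c₂) = 0 and sup_{x ∈ I} C_J(f x, f x) = 0, yet C_J(f♯ c₁, f♯ c₂) = 1. -/
/-- `C` is not `Eq`-composable. -/
theorem costC_not_eq_composable :
    ∃ (I J : Type) (f : I → ℕ × J) (c₁ c₂ : ℕ × I),
      costC c₁ c₂ = 0 ∧ (⨆ x : I, costC (f x) (f x)) = 0 ∧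
      costC (costSharp f c₁) (costSharp f c₂) = 1 := by
  refine ⟨Bool, Unit, fun b => (if b then 1 else 0, ()), (0, true), (0, false), ?_, ?_, ?_⟩
  · simp [costC, Nat.dist]
  · simp [costC, Nat.dist]
  · simp [costC, costSharp, Nat.dist]
end

section
/- The family NCI of divergences on the monad P(ℕ × −) on Set, valued in ℤ ∪ {−∞, ∞}, defined by NCI_I(A,B) = sup { i − j : (i,x) ∈ A, (j,y) ∈ B } (with sup ∅ = −∞), satisfies Top-unit-reflexivity and Top-composability: NCI_J(f♯ A, g♯ B) ≤ NCI_I(A,B) + sup_{x,y ∈ I} NCI_J(f x, g y) for all A, B ⊆ ℕ × I and f, g : I → P(ℕ × J), where addition is extended by r + (−∞) = (−∞) + r = −∞. -/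
/-- Kleisli extension for the monad `T I = P(ℕ × I)` on `Set`. -/
def pSharp {I J : Type*} (f : I → Set (ℕ × J)) (A : Set (ℕ × I)) : Set (ℕ × J) :=
  {q | ∃ p ∈ A, ∃ r ∈ f p.2, q = (p.1 + r.1, r.2)}

/-- `NCI_I(A,B) = sup { i − j : (i,x) ∈ A, (j,y) ∈ B }` valued in `ℤ ∪ {−∞,∞}`
(represented by `EReal`), with `sup ∅ = −∞`. -/
noncomputable def NCI {I : Type*} (A B : Set (ℕ × I)) : EReal :=
  ⨆ (p : A) (q : B), ((p.1.1 : EReal) - (q.1.1 : EReal))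

lemma nat_split (a b c d : ℕ) :
    ((a + c : ℕ) : EReal) - ((b + d : ℕ) : EReal)
      = ((a : EReal) - (b : EReal)) + ((c : EReal) - (d : EReal)) := by
  have h : ∀ n : ℕ, ((n : EReal)) = (((n : ℝ) : EReal)) := by
    intro n; norm_cast
  rw [h, h, h, h, h, h, ← EReal.coe_sub, ← EReal.coe_sub, ← EReal.coe_sub, ← EReal.coe_add]
  exact congrArg _ (by push_cast; ring)

theorem NCI_top_unit_reflexive_and_composable {I J : Type*} :
    (∀ x y : I, NCI {((0 : ℕ), x)} {((0 : ℕ), y)} ≤ 0) ∧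
    (∀ (A B : Set (ℕ × I)) (f g : I → Set (ℕ × J)),
      NCI (pSharp f A) (pSharp g B) ≤ NCI A B + ⨆ p : I × I, NCI (f p.1) (g p.2)) := by
  constructor
  · intro x y
    apply iSup_le; intro p; apply iSup_le; intro q
    have hp : p.1.1 = 0 := by
      have h := p.2; rw [Set.mem_singleton_iff] at h; rw [h]
    have hq : q.1.1 = 0 := by
      have h := q.2; rw [Set.mem_singleton_iff] at h; rw [h]
    rw [hp, hq]
    simp
  · intro A B f g
    apply iSup_le; intro q; apply iSup_le; intro q'
    obtain ⟨p, hp, r, hr, hq⟩ := q.2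
    obtain ⟨p', hp', r', hr', hq'⟩ := q'.2
    have h1 : (q.1.1 : EReal) - (q'.1.1 : EReal)
        = ((p.1 : EReal) - (p'.1 : EReal)) + ((r.1 : EReal) - (r'.1 : EReal)) := by
      rw [hq, hq']
      exact_mod_cast nat_split p.1 p'.1 r.1 r'.1
    rw [h1]
    have h2 : ((p.1 : EReal) - (p'.1 : EReal)) ≤ NCI A B := by
      refine le_trans ?_ (le_iSup _ (⟨p, hp⟩ : A))
      exact le_iSup (fun q : B => ((p.1 : EReal) - (q.1.1 : EReal))) (⟨p', hp'⟩ : B)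
    have h3 : ((r.1 : EReal) - (r'.1 : EReal)) ≤ ⨆ p : I × I, NCI (f p.1) (g p.2) := by
      refine le_trans ?_ (le_iSup _ (p.2, p'.2))
      refine le_trans ?_ (le_iSup _ (⟨r, hr⟩ : f p.2))
      exact le_iSup (fun s : g p'.2 => ((r.1 : EReal) - (s.1.1 : EReal))) (⟨r', hr'⟩ : g p'.2)
    exact add_le_add h2 h3
end

section
/- The family Δ^{lip,d_S} of divergences on the state monad T_S I = S → (I × S) on Set, defined by Δ^{lip,d_S}_I(f₁,f₂) = sup_{s₁,s₂ ∈ S} d_S(π₂(f₁ s₁), π₂(f₂ s₂)) / d_S(s₁,s₂) (with 0/0 = 1), is a Top-relative divergence on T_S with divergence domain ([0,∞], ≤, 1, ×): it satisfies Top-unit-reflexivity (Δ^{lip,d_S}_I(η x, η y) = 1) and multiplicative Top-composability: Δ^{lip,d_S}_J(F₁♯ f₁, F₂♯ f₂) ≤ Δ^{lip,d_S}_I(f₁,f₂) · sup_{x,y ∈ I} Δ^{lip,d_S}_J(F₁ x, F₂ y). -/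
open scoped ENNReal

/-- Division on `[0,∞]` with the convention `0/0 = 1` (and `r/0 = ∞` for `r > 0`). -/
noncomputable def qdiv (a b : ℝ≥0∞) : ℝ≥0∞ := if a = 0 ∧ b = 0 then 1 else a / b

/-- Kleisli extension for the state monad `T_S I = S → I × S`. -/
def stSharp {S I J : Type*} (F : I → S → J × S) (f : S → I × S) : S → J × S :=
  fun s => F (f s).1 (f s).2

/-- The Lipschitz divergence `Δ^{lip,d_S}` on the state monad. -/
noncomputable def lipDiv {S I : Type*} (dS : S → S → ℝ≥0∞) (f₁ f₂ : S → I × S) : ℝ≥0∞ :=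
  ⨆ p : S × S, qdiv (dS (f₁ p.1).2 (f₂ p.2).2) (dS p.1 p.2)

lemma qdiv_self_le_one (a : ℝ≥0∞) : qdiv a a ≤ 1 := by
  unfold qdiv
  split
  · exact le_rfl
  · exact ENNReal.div_self_le_one

lemma one_le_qdiv_zero (a : ℝ≥0∞) : 1 ≤ qdiv a 0 := by
  unfold qdiv
  rcases eq_or_ne a 0 with h | h
  · simp [h]
  · simp [h, ENNReal.div_zero h]

lemma one_le_lipDiv {S I : Type*} [Nonempty S] (dS : S → S → ℝ≥0∞)
    (hrefl : ∀ s, dS s s = 0) (f₁ f₂ : S → I × S) : 1 ≤ lipDiv dS f₁ f₂ := by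
  obtain ⟨s⟩ := (inferInstance : Nonempty S)
  refine le_trans ?_ (le_iSup _ ((s, s) : S × S))
  simp only [hrefl]
  exact one_le_qdiv_zero _

lemma qdiv_key {a b c A B : ℝ≥0∞} (hA : qdiv b c ≤ A) (hB : qdiv a b ≤ B)
    (h1A : 1 ≤ A) (h1B : 1 ≤ B) : qdiv a c ≤ A * B := by
  have hA0 : A ≠ 0 := by
    intro h; rw [h] at h1A; exact absurd h1A (by simp)
  have hB0 : B ≠ 0 := by
    intro h; rw [h] at h1B; exact absurd h1B (by simp)
  rcases eq_or_ne c 0 with hc | hc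
  · rcases eq_or_ne b 0 with hb | hb
    · rcases eq_or_ne a 0 with ha | ha
      · simp only [qdiv, ha, hc, and_self, if_true]
        calc (1 : ℝ≥0∞) = 1 * 1 := (one_mul 1).symm
          _ ≤ A * B := mul_le_mul' h1A h1B
      · have hBtop : B = ⊤ := by
          have : qdiv a b = ⊤ := by
            simp [qdiv, ha, hb, ENNReal.div_zero ha]
          exact top_le_iff.mp (this ▸ hB)
        rw [hBtop, ENNReal.mul_top hA0]
        exact le_top
    · have hAtop : A = ⊤ := by
        have : qdiv b c = ⊤ := by
          simp [qdiv, hb, hc, ENNReal.div_zero hb]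
        exact top_le_iff.mp (this ▸ hA)
      rw [hAtop, ENNReal.top_mul hB0]
      exact le_top
  · rcases eq_or_ne b 0 with hb | hb
    · rcases eq_or_ne a 0 with ha | ha
      · simp [qdiv, ha, hc]
      · have hBtop : B = ⊤ := by
          have : qdiv a b = ⊤ := by
            simp [qdiv, ha, hb, ENNReal.div_zero ha]
          exact top_le_iff.mp (this ▸ hB)
        rw [hBtop, ENNReal.mul_top hA0]
        exact le_top
    · rcases eq_or_ne b ⊤ with hbt | hbt
      · rcases eq_or_ne c ⊤ with hct | hct
        · simp [qdiv, hc, hct, ENNReal.div_top]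
        · have hAtop : A = ⊤ := by
            have : qdiv b c = ⊤ := by
              simp [qdiv, hc, hbt, ENNReal.top_div_of_ne_top hct]
            exact top_le_iff.mp (this ▸ hA)
          rw [hAtop, ENNReal.top_mul hB0]
          exact le_top
      · have hA' : b / c ≤ A := by simpa [qdiv, hc] using hA
        have hB' : a / b ≤ B := by simpa [qdiv, hb] using hB
        have heq : a / c = b / c * (a / b) := by
          rw [mul_comm, ← mul_div_assoc, ENNReal.div_mul_cancel hb hbt]
        calc qdiv a c = a / c := by simp [qdiv, hc]
          _ = b / c * (a / b) := heq
          _ ≤ A * B := mul_le_mul' hA' hB'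

theorem lipDiv_top_unit_reflexive_and_mul_composable {S I J : Type*} [Nonempty S]
    (dS : S → S → ℝ≥0∞) (hrefl : ∀ s, dS s s = 0) :
    (∀ x y : I, lipDiv dS (fun s => ((x, s) : I × S)) (fun s => (y, s)) = 1) ∧
    (∀ (F₁ F₂ : I → S → J × S) (f₁ f₂ : S → I × S),
      lipDiv dS (stSharp F₁ f₁) (stSharp F₂ f₂) ≤
        lipDiv dS f₁ f₂ * ⨆ p : I × I, lipDiv dS (F₁ p.1) (F₂ p.2)) := by
  constructor
  · intro x y
    refine le_antisymm ?_ (one_le_lipDiv dS hrefl _ _)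
    refine iSup_le fun p => ?_
    exact qdiv_self_le_one _
  · intro F₁ F₂ f₁ f₂
    refine iSup_le fun p => ?_
    set A := lipDiv dS f₁ f₂ with hAdef
    set B := ⨆ q : I × I, lipDiv dS (F₁ q.1) (F₂ q.2) with hBdef
    have hA : qdiv (dS (f₁ p.1).2 (f₂ p.2).2) (dS p.1 p.2) ≤ A :=
      le_iSup (fun q : S × S => qdiv (dS (f₁ q.1).2 (f₂ q.2).2) (dS q.1 q.2)) p
    have hBle : lipDiv dS (F₁ (f₁ p.1).1) (F₂ (f₂ p.2).1) ≤ B :=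
      le_iSup (fun q : I × I => lipDiv dS (F₁ q.1) (F₂ q.2)) ((f₁ p.1).1, (f₂ p.2).1)
    have hB : qdiv (dS (stSharp F₁ f₁ p.1).2 (stSharp F₂ f₂ p.2).2)
        (dS (f₁ p.1).2 (f₂ p.2).2) ≤ B := by
      refine le_trans ?_ hBle
      exact le_iSup (fun q : S × S =>
        qdiv (dS (F₁ (f₁ p.1).1 q.1).2 (F₂ (f₂ p.2).1 q.2).2) (dS q.1 q.2))
        ((f₁ p.1).2, (f₂ p.2).2)
    have h1A : 1 ≤ A := one_le_lipDiv dS hrefl _ _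
    have h1B : 1 ≤ B := le_trans (one_le_lipDiv dS hrefl _ _) hBle
    exact qdiv_key hA hB h1A h1B
end

section
/- Preorders on a monad T on Set are in bijective correspondence with Eq-relative divergences Δ on T valued in the two-element divergence domain B = ({0 ≥ 1}, 1, ×) such that each relation {(c₁,c₂) : Δ_I(c₁,c₂) ≤ 1} is a preorder on T I. Concretely, given a preorder ⊑ on T, defining Δ_I(c₁,c₂) = 1 if c₁ ⊑_I c₂ and 0 otherwise yields such a divergence, and this assignment is a bijection. -/
/-- Data of a monad on `Set` (unit and Kleisli extension). -/
structure MonadData where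
  T : Type → Type
  pur : (I : Type) → I → T I
  sh : (I J : Type) → (I → T J) → T I → T J

/-- A preorder on a monad `T` on `Set`: a preorder `⊑_I` on each `T I`,
substitutive and congruent. -/
structure MonadPreorder (M : MonadData) where
  r : ∀ I : Type, M.T I → M.T I → Prop
  refl : ∀ (I : Type) (c : M.T I), r I c c
  trans : ∀ (I : Type) (a b c : M.T I), r I a b → r I b c → r I a c
  subst : ∀ (I J : Type) (f : I → M.T J) (c₁ c₂ : M.T I),
    r I c₁ c₂ → r J (M.sh I J f c₁) (M.sh I J f c₂)
  congr : ∀ (I J : Type) (f₁ f₂ : I → M.T J) (c : M.T I),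
    (∀ x, r J (f₁ x) (f₂ x)) → r J (M.sh I J f₁ c) (M.sh I J f₂ c)

/-- An `Eq`-relative divergence on `T` valued in the two-element divergence domain
`B = ({0 ≥ 1}, 1, ×)`, encoded by `Bool` with `true = 1` and `false = 0`
(so that `Δ ≤ 1` means `Δ = true`), such that each relation
`{(c₁,c₂) : Δ_I(c₁,c₂) ≤ 1}` is a preorder. The `comp` field encodes the
`B`-inequality `Δ_J(f♯c₁, g♯c₂) ≤ Δ_I(c₁,c₂) × sup_x Δ_J(f x, g x)`. -/
structure BDivergence (M : MonadData) where
  d : ∀ I : Type, M.T I → M.T I → Bool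
  unitRefl : ∀ (I : Type) (x : I), d I (M.pur I x) (M.pur I x) = true
  comp : ∀ (I J : Type) (f g : I → M.T J) (c₁ c₂ : M.T I),
    d I c₁ c₂ = true → (∀ x, d J (f x) (g x) = true) →
    d J (M.sh I J f c₁) (M.sh I J g c₂) = true
  preRefl : ∀ (I : Type) (c : M.T I), d I c c = true
  preTrans : ∀ (I : Type) (a b c : M.T I), d I a b = true → d I b c = true → d I a c = true

/-- Preorders on a monad `T` on `Set` are in bijective correspondence with
`Eq`-relative `B`-valued divergences whose `≤ 1` relations are preorders,
via `Δ_I(c₁,c₂) = 1 ↔ c₁ ⊑_I c₂`. -/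
theorem monadPreorder_equiv_bDivergence (M : MonadData) :
    ∃ e : MonadPreorder M ≃ BDivergence M,
      ∀ (P : MonadPreorder M) (I : Type) (c₁ c₂ : M.T I),
        (e P).d I c₁ c₂ = true ↔ P.r I c₁ c₂ := by
  classical
  refine ⟨{
    toFun := fun P => {
      d := fun I c₁ c₂ => decide (P.r I c₁ c₂)
      unitRefl := fun I x => by simp [P.refl]
      comp := fun I J f g c₁ c₂ h hf => by
        simp only [decide_eq_true_eq] at *
        exact P.trans J _ _ _ (P.subst I J f c₁ c₂ h) (P.congr I J f g c₂ hf)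
      preRefl := fun I c => by simp [P.refl]
      preTrans := fun I a b c hab hbc => by
        simp only [decide_eq_true_eq] at *
        exact P.trans I a b c hab hbc }
    invFun := fun D => {
      r := fun I c₁ c₂ => D.d I c₁ c₂ = true
      refl := D.preRefl
      trans := D.preTrans
      subst := fun I J f c₁ c₂ h => D.comp I J f f c₁ c₂ h (fun x => D.preRefl J (f x))
      congr := fun I J f₁ f₂ c hf => D.comp I J f₁ f₂ c c (D.preRefl I c) hf }
    left_inv := fun P => by
      cases P; simp only [MonadPreorder.mk.injEq]
      funext I c₁ c₂; simp
    right_inv := fun D => by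
      cases D; simp only [BDivergence.mk.injEq]
      funext I c₁ c₂; simp }, ?_⟩
  intro P I c₁ c₂
  simp
end

section
/- Let T be a monad on a Cartesian category C with a basic endorelation E such that the relation E1 on the terminal object is nonempty, let Q be a divergence domain, and let Δ = {Δ_I : (U(TI))² → Q} be a family of Q-divergences. Define d_{I,J}(f₁,f₂) = sup_{(x₁,x₂) ∈ EI} Δ_J(f₁ ∘ x₁, f₂ ∘ x₂) on the homsets of the Kleisli category C_T. Then d is an enrichment of C_T in Q-divergence spaces (i.e. d_{I,I}(id,id) ≤ 0 and d_{I,K}(g₁ ∘ f₁, g₂ ∘ f₂) ≤ d_{J,K}(g₁,g₂) + d_{I,J}(f₁,f₂) for Kleisli composition) if and only if Δ is E-unit-reflexive and E-composable. -/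
/-!
Unit-reflexivity is the identity inequality verbatim. The composition inequality is the supremum
over `E I` of composability at `c = f x`; conversely, precomposing with constant maps out of
`PUnit`, where `E PUnit` is nonempty so the supremum defining `d` collapses to a single value,
turns the composition inequality into composability at `(c₁, c₂)`.
-/

section KleisliDiv

variable {Q : Type*} [CompleteLattice Q] {T : Type → Type}
  (E : ∀ I : Type, I → I → Prop) (Δ : ∀ I : Type, T I → T I → Q)

/-- The divergence `d_{I,J}` on the Kleisli homset `I → T J`. -/
def kleisliDiv (I J : Type) (f₁ f₂ : I → T J) : Q :=
  ⨆ p : {p : I × I // E I p.1 p.2}, Δ J (f₁ p.1.1) (f₂ p.1.2)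

variable {E Δ}

theorem le_kleisliDiv {I J : Type} (f₁ f₂ : I → T J) {x₁ x₂ : I} (hx : E I x₁ x₂) :
    Δ J (f₁ x₁) (f₂ x₂) ≤ kleisliDiv E Δ I J f₁ f₂ :=
  le_iSup_of_le (⟨(x₁, x₂), hx⟩ : {p : I × I // E I p.1 p.2}) le_rfl

theorem kleisliDiv_const (hE1 : E PUnit PUnit.unit PUnit.unit) {I : Type} (c₁ c₂ : T I) :
    kleisliDiv E Δ PUnit I (fun _ => c₁) (fun _ => c₂) = Δ I c₁ c₂ :=
  haveI : Nonempty {p : PUnit × PUnit // E PUnit p.1 p.2} := ⟨⟨(PUnit.unit, PUnit.unit), hE1⟩⟩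
  iSup_const

variable [AddCommMonoid Q] {sh : (I J : Type) → (I → T J) → T I → T J}

theorem composable_of_kleisliDiv_comp_le (hE1 : E PUnit PUnit.unit PUnit.unit)
    (hcomp : ∀ (I J K : Type) (g₁ g₂ : J → T K) (f₁ f₂ : I → T J),
      kleisliDiv E Δ I K (fun x => sh J K g₁ (f₁ x)) (fun x => sh J K g₂ (f₂ x)) ≤
        kleisliDiv E Δ J K g₁ g₂ + kleisliDiv E Δ I J f₁ f₂)
    {I J : Type} (f₁ f₂ : I → T J) (c₁ c₂ : T I) :
    Δ J (sh I J f₁ c₁) (sh I J f₂ c₂) ≤ Δ I c₁ c₂ + kleisliDiv E Δ I J f₁ f₂ := by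
  have h := hcomp PUnit I J f₁ f₂ (fun _ => c₁) (fun _ => c₂)
  rwa [kleisliDiv_const hE1, kleisliDiv_const hE1, add_comm] at h

theorem kleisliDiv_comp_le_of_composable [AddLeftMono Q]
    (hcmp : ∀ (I J : Type) (f₁ f₂ : I → T J) (c₁ c₂ : T I),
      Δ J (sh I J f₁ c₁) (sh I J f₂ c₂) ≤ Δ I c₁ c₂ + kleisliDiv E Δ I J f₁ f₂)
    {I J K : Type} (g₁ g₂ : J → T K) (f₁ f₂ : I → T J) :
    kleisliDiv E Δ I K (fun x => sh J K g₁ (f₁ x)) (fun x => sh J K g₂ (f₂ x)) ≤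
      kleisliDiv E Δ J K g₁ g₂ + kleisliDiv E Δ I J f₁ f₂ := by
  refine iSup_le fun ⟨(x₁, x₂), hx⟩ => ?_
  calc Δ K (sh J K g₁ (f₁ x₁)) (sh J K g₂ (f₂ x₂))
      ≤ Δ J (f₁ x₁) (f₂ x₂) + kleisliDiv E Δ J K g₁ g₂ := hcmp J K g₁ g₂ (f₁ x₁) (f₂ x₂)
    _ ≤ kleisliDiv E Δ I J f₁ f₂ + kleisliDiv E Δ J K g₁ g₂ := by
        gcongr; exact le_kleisliDiv f₁ f₂ hx
    _ = kleisliDiv E Δ J K g₁ g₂ + kleisliDiv E Δ I J f₁ f₂ := add_comm _ _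

end KleisliDiv

theorem kleisli_enrichment_iff_divergence_general {Q : Type*} [CompleteLattice Q]
    [AddCommMonoid Q] [CovariantClass Q Q (· + ·) (· ≤ ·)]
    (T : Type → Type) (pur : (I : Type) → I → T I)
    (sh : (I J : Type) → (I → T J) → T I → T J)
    (E : ∀ I : Type, I → I → Prop)
    (hE1 : E PUnit PUnit.unit PUnit.unit)
    (Δ : ∀ I : Type, T I → T I → Q)
    (d : ∀ I J : Type, (I → T J) → (I → T J) → Q)
    (hd : ∀ (I J : Type) (f₁ f₂ : I → T J),
      d I J f₁ f₂ = ⨆ p : {p : I × I // E I p.1 p.2}, Δ J (f₁ p.1.1) (f₂ p.1.2)) :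
    ((∀ I : Type, d I I (fun x => pur I x) (fun x => pur I x) ≤ 0) ∧
      (∀ (I J K : Type) (g₁ g₂ : J → T K) (f₁ f₂ : I → T J),
        d I K (fun x => sh J K g₁ (f₁ x)) (fun x => sh J K g₂ (f₂ x)) ≤
          d J K g₁ g₂ + d I J f₁ f₂))
    ↔
    ((∀ I : Type,
        (⨆ p : {p : I × I // E I p.1 p.2}, Δ I (pur I p.1.1) (pur I p.1.2)) ≤ 0) ∧
      (∀ (I J : Type) (f₁ f₂ : I → T J) (c₁ c₂ : T I),
        Δ J (sh I J f₁ c₁) (sh I J f₂ c₂) ≤ Δ I c₁ c₂ +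
          ⨆ p : {p : I × I // E I p.1 p.2}, Δ J (f₁ p.1.1) (f₂ p.1.2))) := by
  obtain rfl : d = kleisliDiv E Δ := by
    funext I J f₁ f₂
    exact hd I J f₁ f₂
  exact and_congr Iff.rfl
    ⟨fun hcomp _ _ => composable_of_kleisliDiv_comp_le hE1 hcomp,
      fun hcmp _ _ _ => kleisliDiv_comp_le_of_composable hcmp⟩

/-- For a monad `(T, η, ♯)` on `Set`, a basic endorelation `E` with `E 1` nonempty,
and a family of `Q`-divergences `Δ_I` on `T I`, the homset divergences
`d_{I,J}(f₁,f₂) = sup_{(x₁,x₂) ∈ E I} Δ_J(f₁ x₁, f₂ x₂)` form an enrichment of the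
Kleisli category (identity and composition inequalities) iff `Δ` is
`E`-unit-reflexive and `E`-composable. -/
theorem kleisli_enrichment_iff_divergence {Q : Type*} [CompleteLattice Q]
    [AddCommMonoid Q] [CovariantClass Q Q (· + ·) (· ≤ ·)]
    [CovariantClass Q Q (Function.swap (· + ·)) (· ≤ ·)]
    (T : Type → Type) (pur : (I : Type) → I → T I)
    (sh : (I J : Type) → (I → T J) → T I → T J)
    (E : ∀ I : Type, I → I → Prop)
    (hEfun : ∀ (I J : Type) (f : I → J) (x y : I), E I x y → E J (f x) (f y))
    (hE1 : E PUnit PUnit.unit PUnit.unit)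
    (Δ : ∀ I : Type, T I → T I → Q)
    (d : ∀ I J : Type, (I → T J) → (I → T J) → Q)
    (hd : ∀ (I J : Type) (f₁ f₂ : I → T J),
      d I J f₁ f₂ = ⨆ p : {p : I × I // E I p.1 p.2}, Δ J (f₁ p.1.1) (f₂ p.1.2)) :
    ((∀ I : Type, d I I (fun x => pur I x) (fun x => pur I x) ≤ 0) ∧
      (∀ (I J K : Type) (g₁ g₂ : J → T K) (f₁ f₂ : I → T J),
        d I K (fun x => sh J K g₁ (f₁ x)) (fun x => sh J K g₂ (f₂ x)) ≤
          d J K g₁ g₂ + d I J f₁ f₂))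
    ↔
    ((∀ I : Type,
        (⨆ p : {p : I × I // E I p.1 p.2}, Δ I (pur I p.1.1) (pur I p.1.2)) ≤ 0) ∧
      (∀ (I J : Type) (f₁ f₂ : I → T J) (c₁ c₂ : T I),
        Δ J (sh I J f₁ c₁) (sh I J f₂ c₂) ≤ Δ I c₁ c₂ +
          ⨆ p : {p : I × I // E I p.1 p.2}, Δ J (f₁ p.1.1) (f₂ p.1.2))) :=
  kleisli_enrichment_iff_divergence_general T pur sh E hE1 Δ d hd
end

section
/- If a divergence Δ on a monad T on Set is Ω-generated, then the codensity lifting computed with test objects ranging over all sets coincides with the codensity lifting computed with the single test object Ω: for every binary relation X and grades (m,v), (c₁,c₂) ∈ Ṫ(m,v)X iff for all n, w and all pairs (k₁,k₂) mapping X into Δ̃(n,w)Ω, one has (k₁♯ c₁, k₂♯ c₂) ∈ Δ̃(m·n, v+w)Ω. -/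
/-- If a graded divergence `Δ` on a monad `T` on `Set` is `Ω`-generated, then the
codensity lifting computed with test objects ranging over all sets coincides with the
one computed with the single test object `Ω`. -/
theorem codensity_lifting_omega_generated_simplification
    {M Q : Type*} [Monoid M] [PartialOrder M]
    [CovariantClass M M (· * ·) (· ≤ ·)]
    [CovariantClass M M (Function.swap (· * ·)) (· ≤ ·)]
    [CompleteLattice Q] [AddCommMonoid Q]
    [CovariantClass Q Q (· + ·) (· ≤ ·)]
    [CovariantClass Q Q (Function.swap (· + ·)) (· ≤ ·)]
    (T : Type → Type) (pur : (I : Type) → I → T I)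
    (sh : (I J : Type) → (I → T J) → T I → T J)
    (hpure : ∀ (I J : Type) (k : I → T J) (x : I), sh I J k (pur I x) = k x)
    (hassoc : ∀ (I J K : Type) (f : I → T J) (k : J → T K) (c : T I),
      sh J K k (sh I J f c) = sh I K (fun x => sh J K k (f x)) c)
    (Δ : M → (I : Type) → T I → T I → Q)
    (hmono : ∀ {m m' : M}, m ≤ m' → ∀ (I : Type) (c₁ c₂ : T I),
      Δ m' I c₁ c₂ ≤ Δ m I c₁ c₂)
    (Ω : Type)
    (hgen : ∀ (m : M) (I : Type) (c₁ c₂ : T I),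
      Δ m I c₁ c₂ = ⨆ k : I → T Ω, Δ m Ω (sh I Ω k c₁) (sh I Ω k c₂))
    (lift : M → Q → (X₁ X₂ : Type) → (X₁ → X₂ → Prop) → T X₁ → T X₂ → Prop)
    (hlift : ∀ (m : M) (v : Q) (X₁ X₂ : Type) (R : X₁ → X₂ → Prop) (c₁ : T X₁)
      (c₂ : T X₂), lift m v X₁ X₂ R c₁ c₂ ↔
        ∀ (I : Type) (n : M) (w : Q) (k₁ : X₁ → T I) (k₂ : X₂ → T I),
          (∀ x₁ x₂, R x₁ x₂ → Δ n I (k₁ x₁) (k₂ x₂) ≤ w) →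
          Δ (m * n) I (sh X₁ I k₁ c₁) (sh X₂ I k₂ c₂) ≤ v + w) :
    ∀ (m : M) (v : Q) (X₁ X₂ : Type) (R : X₁ → X₂ → Prop) (c₁ : T X₁) (c₂ : T X₂),
      lift m v X₁ X₂ R c₁ c₂ ↔
        ∀ (n : M) (w : Q) (k₁ : X₁ → T Ω) (k₂ : X₂ → T Ω),
          (∀ x₁ x₂, R x₁ x₂ → Δ n Ω (k₁ x₁) (k₂ x₂) ≤ w) →
          Δ (m * n) Ω (sh X₁ Ω k₁ c₁) (sh X₂ Ω k₂ c₂) ≤ v + w := by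
  intro m v X₁ X₂ R c₁ c₂
  rw [hlift]
  constructor
  · intro h n w k₁ k₂ hk
    exact h Ω n w k₁ k₂ hk
  · intro h I n w k₁ k₂ hk
    rw [hgen (m * n) I]
    apply iSup_le
    intro k
    rw [hassoc, hassoc]
    exact h n w (fun x => sh I Ω k (k₁ x)) (fun x => sh I Ω k (k₂ x)) (fun x₁ x₂ hR => by
      have hle : Δ n Ω (sh I Ω k (k₁ x₁)) (sh I Ω k (k₂ x₂)) ≤ Δ n I (k₁ x₁) (k₂ x₂) := by
        rw [hgen n I]; exact le_iSup (fun k' => Δ n Ω (sh I Ω k' (k₁ x₁)) (sh I Ω k' (k₂ x₂))) k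
      exact hle.trans (hk x₁ x₂ hR))
end

section
/- Let T be a monad on Set and X a set. For any congruent and substitutive extended pseudometric d on TX, the family Gen(d) defined by Gen(d)_I(c₁,c₂) = sup_{k : I → TX} d(k♯ c₁, k♯ c₂) is an X-generated Eq-relative [0,∞]-divergence on T in which every component Gen(d)_I is an extended pseudometric; moreover the map Gen is inverse to the map sending an X-generated divergence Δ (with pseudometric components) to its X-component Δ_X, so these two collections are in order-isomorphism. -/
open scoped ENNReal

section

variable (T : Type → Type) (pur : (I : Type) → I → T I)
  (sh : (I J : Type) → (I → T J) → T I → T J) (X : Type)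

/-- A congruent and substitutive extended pseudometric on `T X`. -/
def IsCSEPMet (d : T X → T X → ℝ≥0∞) : Prop :=
  (∀ c, d c c = 0) ∧ (∀ c₁ c₂, d c₁ c₂ = d c₂ c₁) ∧
  (∀ a b c, d a c ≤ d a b + d b c) ∧
  (∀ (f : X → T X) (c₁ c₂ : T X), d (sh X X f c₁) (sh X X f c₂) ≤ d c₁ c₂) ∧
  (∀ (I : Type) (f₁ f₂ : I → T X) (c : T I),
    d (sh I X f₁ c) (sh I X f₂ c) ≤ ⨆ i : I, d (f₁ i) (f₂ i))

/-- `Gen(d)_I(c₁,c₂) = sup_{k : I → T X} d(k♯ c₁, k♯ c₂)`. -/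
noncomputable def GenDiv (d : T X → T X → ℝ≥0∞) : (I : Type) → T I → T I → ℝ≥0∞ :=
  fun I c₁ c₂ => ⨆ k : I → T X, d (sh I X k c₁) (sh I X k c₂)

/-- An `X`-generated `Eq`-relative `[0,∞]`-divergence on `T` all of whose components
are extended pseudometrics. -/
def IsDivEPMet (Δ : (I : Type) → T I → T I → ℝ≥0∞) : Prop :=
  (∀ (I : Type) (c : T I), Δ I c c = 0) ∧
  (∀ (I : Type) (c₁ c₂ : T I), Δ I c₁ c₂ = Δ I c₂ c₁) ∧
  (∀ (I : Type) (a b c : T I), Δ I a c ≤ Δ I a b + Δ I b c) ∧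
  (∀ (I : Type) (x : I), Δ I (pur I x) (pur I x) = 0) ∧
  (∀ (I J : Type) (f₁ f₂ : I → T J) (c₁ c₂ : T I),
    Δ J (sh I J f₁ c₁) (sh I J f₂ c₂) ≤ Δ I c₁ c₂ + ⨆ x : I, Δ J (f₁ x) (f₂ x)) ∧
  (∀ (I : Type) (c₁ c₂ : T I),
    Δ I c₁ c₂ = ⨆ k : I → T X, Δ X (sh I X k c₁) (sh I X k c₂))

/-- `Gen` sends CS-pseudometrics on `T X` to `X`-generated `Eq`-relative divergences
with pseudometric components, and is mutually inverse with the map `Δ ↦ Δ_X`; hence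
the two collections are in order-isomorphism. -/
theorem gen_csEPMet_orderIso_divEPMet
    (hid : ∀ (I : Type) (c : T I), sh I I (pur I) c = c)
    (hpure : ∀ (I J : Type) (k : I → T J) (x : I), sh I J k (pur I x) = k x)
    (hassoc : ∀ (I J K : Type) (f : I → T J) (k : J → T K) (c : T I),
      sh J K k (sh I J f c) = sh I K (fun x => sh J K k (f x)) c) :
    (∀ d, IsCSEPMet T sh X d → IsDivEPMet T pur sh X (GenDiv T sh X d)) ∧
    (∀ d, IsCSEPMet T sh X d → GenDiv T sh X d X = d) ∧
    (∀ Δ, IsDivEPMet T pur sh X Δ →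
      IsCSEPMet T sh X (Δ X) ∧ GenDiv T sh X (Δ X) = Δ) := by
  have h2 : ∀ d, IsCSEPMet T sh X d → GenDiv T sh X d X = d := by
    intro d hd
    funext c₁ c₂
    apply le_antisymm
    · exact iSup_le fun k => hd.2.2.2.1 k c₁ c₂
    · calc d c₁ c₂ = d (sh X X (pur X) c₁) (sh X X (pur X) c₂) := by rw [hid, hid]
        _ ≤ ⨆ k : X → T X, d (sh X X k c₁) (sh X X k c₂) :=
          le_iSup (fun k => d (sh X X k c₁) (sh X X k c₂)) (pur X)
  have h1 : ∀ d, IsCSEPMet T sh X d → IsDivEPMet T pur sh X (GenDiv T sh X d) := by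
    intro d hd
    have hX := h2 d hd
    obtain ⟨hrefl, hsymm, htri, hsub, hcong⟩ := hd
    refine ⟨?_, ?_, ?_, ?_, ?_, ?_⟩
    · intro I c; simp [GenDiv, hrefl]
    · intro I c₁ c₂; exact iSup_congr fun k => hsymm _ _
    · intro I a b c
      refine iSup_le fun k => le_trans (htri _ (sh I X k b) _) ?_
      exact add_le_add
        (le_iSup (fun k' : I → T X => d (sh I X k' a) (sh I X k' b)) k)
        (le_iSup (fun k' : I → T X => d (sh I X k' b) (sh I X k' c)) k)
    · intro I x; simp [GenDiv, hrefl]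
    · intro I J f₁ f₂ c₁ c₂
      refine iSup_le fun k => ?_
      rw [hassoc, hassoc]
      refine le_trans (htri _ (sh I X (fun x => sh J X k (f₁ x)) c₂) _) ?_
      refine add_le_add
        (le_iSup (fun k' : I → T X => d (sh I X k' c₁) (sh I X k' c₂)) _) ?_
      refine le_trans (hcong I _ _ c₂) ?_
      exact iSup_mono fun x =>
        le_iSup (fun k' : J → T X => d (sh J X k' (f₁ x)) (sh J X k' (f₂ x))) k
    · intro I c₁ c₂
      rw [hX]; rfl
  refine ⟨h1, h2, ?_⟩
  intro Δ hΔ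
  obtain ⟨hrefl, hsymm, htri, hpur, hcomp, hgen⟩ := hΔ
  constructor
  · refine ⟨hrefl X, hsymm X, htri X, ?_, ?_⟩
    · intro f c₁ c₂
      calc Δ X (sh X X f c₁) (sh X X f c₂)
          ≤ Δ X c₁ c₂ + ⨆ x : X, Δ X (f x) (f x) := hcomp X X f f c₁ c₂
        _ = Δ X c₁ c₂ := by simp [hrefl]
    · intro I f₁ f₂ c
      calc Δ X (sh I X f₁ c) (sh I X f₂ c)
          ≤ Δ I c c + ⨆ i, Δ X (f₁ i) (f₂ i) := hcomp I X f₁ f₂ c c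
        _ = ⨆ i, Δ X (f₁ i) (f₂ i) := by rw [hrefl, zero_add]
  · funext I c₁ c₂
    exact (hgen I c₁ c₂).symm

end
end

section
/- The total variation distance on the subprobability monad over the discrete space 2 = {0,1} is not 1-generated: there exist subprobability distributions ν₁ = (1/2)δ₀ + (1/2)δ₁ and ν₂ = (1/3)δ₀ + (2/3)δ₁ on {0,1} with TV(ν₁,ν₂) = 1/6, yet for every f : {0,1} → [0,1] (viewed as a subprobability kernel into the one-point space), TV(f♯ ν₁, f♯ ν₂) = (1/12)|f(0) − f(1)| ≤ 1/12 < 1/6. -/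
/-- The total variation distance on subprobability distributions over `2 = {0,1}` is
not 1-generated: for `ν₁ = (1/2)δ₀ + (1/2)δ₁` and `ν₂ = (1/3)δ₀ + (2/3)δ₁`,
`TV(ν₁,ν₂) = 1/6`, yet for every subprobability kernel `f : {0,1} → [0,1]` into the
one-point space, `TV(f♯ν₁, f♯ν₂) = (1/12)|f 0 − f 1| ≤ 1/12 < 1/6`. -/
theorem tv_not_one_generated :
    ∃ ν₁ ν₂ : Bool → ℝ,
      ν₁ = (fun _ => (1 / 2 : ℝ)) ∧
      ν₂ = (fun b => if b then (2 / 3 : ℝ) else 1 / 3) ∧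
      (1 / 2 : ℝ) * (|ν₁ false - ν₂ false| + |ν₁ true - ν₂ true|) = 1 / 6 ∧
      (∀ f : Bool → ℝ, (∀ b, 0 ≤ f b ∧ f b ≤ 1) →
        (1 / 2 : ℝ) *
            |(ν₁ false * f false + ν₁ true * f true) -
              (ν₂ false * f false + ν₂ true * f true)| =
          (1 / 12) * |f false - f true| ∧
        (1 / 12 : ℝ) * |f false - f true| ≤ 1 / 12) ∧
      (1 / 12 : ℝ) < 1 / 6 := by
  refine ⟨_, _, rfl, rfl, by norm_num [abs_of_nonneg], ?_, by norm_num⟩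
  intro f hf
  obtain ⟨h00, h01⟩ := hf false
  obtain ⟨h10, h11⟩ := hf true
  simp only [Bool.false_eq_true, if_false, if_true]
  constructor
  · rw [show ((1:ℝ)/2 * f false + 1/2 * f true - (1/3 * f false + 2/3 * f true))
        = (1/6) * (f false - f true) from by ring, abs_mul]
    rw [abs_of_nonneg (by norm_num : (0:ℝ) ≤ 1/6)]
    ring
  · have h : |f false - f true| ≤ 1 := by rw [abs_le]; constructor <;> linarith
    nlinarith [h]
end

section
/- Pointwise indistinguishability fails Eq-composability for discrete distributions: with α = exp(ε) for any ε ≥ 0, let μ₁ = (1/10)δ₀ + (9/10)δ₁ and μ₂ = (9/(10α))δ₁ + (1 − 9/(10α))δ₂ on {0,1,2}, and f : {0,1,2} → Dist{0,1} given by f(0) = (1/10)δ₀ + (9/10)δ₁, f(1) = (9/10)δ₀ + (1/10)δ₁, f(2) = δ₁. Then PW^ε(μ₁,μ₂) = 1/10 and PW^ε(f x, f x) = 0 for all x, but PW^ε(f♯ μ₁, f♯ μ₂) = 82/100 > 1/10 + 0. -/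
open Finset in
/-- Pointwise indistinguishability `PW^ε(μ₁,μ₂)` for finitely supported distributions:
the infimum of `μ₁(J ∖ A)` over subsets `A` on which `μ₁ ≤ exp(ε)·μ₂` pointwise. -/
noncomputable def PW {J : Type*} [Fintype J] [DecidableEq J] (ε : ℝ) (μ₁ μ₂ : J → ℝ) : ℝ :=
  sInf {t : ℝ | ∃ A : Finset J,
    (∀ s ∈ A, μ₁ s ≤ Real.exp ε * μ₂ s) ∧ t = ∑ s ∈ Aᶜ, μ₁ s}

/-- `μ₁ = (1/10)δ₀ + (9/10)δ₁` on `{0,1,2}`. -/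
noncomputable def pwMu1 : Fin 3 → ℝ := ![1 / 10, 9 / 10, 0]

/-- `μ₂ = (9/(10α))δ₁ + (1 − 9/(10α))δ₂` on `{0,1,2}`, where `α = exp ε`. -/
noncomputable def pwMu2 (ε : ℝ) : Fin 3 → ℝ :=
  ![0, 9 / (10 * Real.exp ε), 1 - 9 / (10 * Real.exp ε)]

/-- The kernel `f : {0,1,2} → Dist{0,1}`. -/
noncomputable def pwF : Fin 3 → Fin 2 → ℝ :=
  ![![1 / 10, 9 / 10], ![9 / 10, 1 / 10], ![0, 1]]

/-!
For a nonnegative `μ₁` the infimum defining `PW^ε(μ₁,μ₂)` is attained at the largest admissible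
set `A = {s | μ₁ s ≤ exp ε · μ₂ s}`, so `PW^ε(μ₁,μ₂)` is the `μ₁`-mass of the points where
`exp ε · μ₂ < μ₁`. In the example this violating set is `{0}` for both pairs: it carries mass
`1/10` under `μ₁`, but mass `82/100` under `f♯μ₁ = (82/100, 18/100)`, because
`exp ε · f♯μ₂ = (81/100, exp ε − 81/100)`.
-/

section PW

variable {J : Type*} [Fintype J] [DecidableEq J] {ε : ℝ} {μ₁ μ₂ : J → ℝ}

theorem PW_eq_sum_of_forall_mem_iff (hμ₁ : 0 ≤ μ₁) (B : Finset J)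
    (hB : ∀ s, s ∈ B ↔ Real.exp ε * μ₂ s < μ₁ s) :
    PW ε μ₁ μ₂ = ∑ s ∈ B, μ₁ s := by
  refine IsLeast.csInf_eq ⟨⟨Bᶜ, fun s hs => ?_, by rw [compl_compl]⟩, ?_⟩
  · exact not_lt.mp fun h => Finset.mem_compl.mp hs ((hB s).mpr h)
  · rintro t ⟨A, hA, rfl⟩
    have hBA : B ⊆ Aᶜ := fun s hs =>
      Finset.mem_compl.mpr fun hsA => ((hB s).mp hs).not_ge (hA s hsA)
    exact Finset.sum_le_sum_of_subset_of_nonneg hBA fun s _ _ => hμ₁ s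

theorem PW_self_eq_zero (hε : 0 ≤ ε) (hμ : 0 ≤ μ₁) : PW ε μ₁ μ₁ = 0 := by
  refine (PW_eq_sum_of_forall_mem_iff hμ ∅ fun s => ?_).trans Finset.sum_empty
  simpa using le_mul_of_one_le_left (hμ s) (Real.one_le_exp hε)

end PW

theorem pwMu1_nonneg : 0 ≤ pwMu1 := by
  intro x
  fin_cases x <;> norm_num [pwMu1]

theorem pwF_nonneg (x : Fin 3) : 0 ≤ pwF x := by
  intro y
  fin_cases x <;> fin_cases y <;> norm_num [pwF]

theorem exp_mul_pwMu2 (ε : ℝ) :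
    (fun s => Real.exp ε * pwMu2 ε s) = ![0, 9 / 10, Real.exp ε - 9 / 10] := by
  have := (Real.exp_pos ε).ne'
  ext s
  fin_cases s <;> simp [pwMu2] <;> field_simp

theorem kleisli_pwMu1_pwF : (fun y => ∑ x : Fin 3, pwMu1 x * pwF x y) = ![82 / 100, 18 / 100] := by
  ext y
  fin_cases y <;> simp [pwMu1, pwF, Fin.sum_univ_three] <;> norm_num

theorem exp_mul_kleisli_pwMu2_pwF (ε : ℝ) :
    (fun y => Real.exp ε * ∑ x : Fin 3, pwMu2 ε x * pwF x y) =
      ![81 / 100, Real.exp ε - 81 / 100] := by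
  have := (Real.exp_pos ε).ne'
  ext y
  fin_cases y <;> simp [pwMu2, pwF, Fin.sum_univ_three] <;> field_simp <;> ring

/-- Pointwise indistinguishability fails Eq-composability. -/
theorem pointwise_indistinguishability_not_eq_composable (ε : ℝ) (hε : 0 ≤ ε) :
    PW ε pwMu1 (pwMu2 ε) = 1 / 10 ∧
    (∀ x : Fin 3, PW ε (pwF x) (pwF x) = 0) ∧
    PW ε (fun y => ∑ x : Fin 3, pwMu1 x * pwF x y)
        (fun y => ∑ x : Fin 3, pwMu2 ε x * pwF x y) = 82 / 100 ∧
    (82 / 100 : ℝ) > 1 / 10 + 0 := by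
  have hα : 1 ≤ Real.exp ε := Real.one_le_exp hε
  refine ⟨?_, fun x => PW_self_eq_zero hε (pwF_nonneg x), ?_, by norm_num⟩
  · rw [PW_eq_sum_of_forall_mem_iff pwMu1_nonneg {0} fun s => ?_]
    · simp [pwMu1]
    · rw [congrFun (exp_mul_pwMu2 ε) s]
      fin_cases s <;> norm_num [pwMu1]
      linarith
  · rw [kleisli_pwMu1_pwF,
      PW_eq_sum_of_forall_mem_iff (fun y => by fin_cases y <;> norm_num) {0} fun y => ?_]
    · simp
    · rw [congrFun (exp_mul_kleisli_pwMu2_pwF ε) y]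
      fin_cases y <;> norm_num
      linarith
end

section
/- For the monad T(I) = S → (I × S) on the category of generalized [0,1]-valued ultrametric spaces (for a fixed space (S,d_S)), the family of sup-max metrics d_{T I}(f₁,f₂) = sup_{s ∈ S} max(d_I(π₁(f₁ s), π₁(f₂ s)), d_S(π₂(f₁ s), π₂(f₂ s))) on nonexpansive state transformers is an Eq-relative divergence with divergence domain ([0,1], ≤, 0, max): d_{T I}(η x, η x) = 0, and d_{T J}(F₁♯ f₁, F₂♯ f₂) ≤ max(d_{T I}(f₁,f₂), sup_{x ∈ I} d_{T J}(F₁ x, F₂ x)) for all nonexpansive F₁, F₂ : I → T J and f₁, f₂ ∈ T I. -/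
open scoped ENNReal

/-- The sup-max metric on state transformers `S → A × S`. -/
noncomputable def dState {S A : Type*} (dS : S → S → ℝ≥0∞) (dA : A → A → ℝ≥0∞)
    (f₁ f₂ : S → A × S) : ℝ≥0∞ :=
  ⨆ s : S, max (dA (f₁ s).1 (f₂ s).1) (dS (f₁ s).2 (f₂ s).2)

/-!
Both components of `(F₁♯ f₁) s = F₁ a₁ s₁` and `(F₂♯ f₂) s = F₂ a₂ s₂`, where `(aᵢ, sᵢ) = fᵢ s`,
are compared through the intermediate point `F₂ a₁ s₁`. The first leg is bounded by
`d(F₁ a₁, F₂ a₁)`, the second, by nonexpansiveness of `F₂`, by the distance of `f₁ s` and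
`f₂ s`; the ultrametric inequality of the max metric on `J × S` combines the two legs.
-/

namespace StateMonad

variable {S A B : Type*}

def prodMaxDist (dA : A → A → ℝ≥0∞) (dB : B → B → ℝ≥0∞) (p q : A × B) : ℝ≥0∞ :=
  max (dA p.1 q.1) (dB p.2 q.2)

theorem prodMaxDist_le_max {dA : A → A → ℝ≥0∞} {dB : B → B → ℝ≥0∞}
    (hA : ∀ a b c, dA a c ≤ max (dA a b) (dA b c))
    (hB : ∀ a b c, dB a c ≤ max (dB a b) (dB b c)) (p q r : A × B) :
    prodMaxDist dA dB p r ≤ max (prodMaxDist dA dB p q) (prodMaxDist dA dB q r) :=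
  max_le
    ((hA _ q.1 _).trans (max_le_max (le_max_left _ _) (le_max_left _ _)))
    ((hB _ q.2 _).trans (max_le_max (le_max_right _ _) (le_max_right _ _)))

theorem prodMaxDist_le_dState (dS : S → S → ℝ≥0∞) (dA : A → A → ℝ≥0∞)
    (f₁ f₂ : S → A × S) (s : S) :
    prodMaxDist dA dS (f₁ s) (f₂ s) ≤ dState dS dA f₁ f₂ :=
  le_iSup (fun t => prodMaxDist dA dS (f₁ t) (f₂ t)) s

theorem dState_self {dS : S → S → ℝ≥0∞} {dA : A → A → ℝ≥0∞}
    (hSr : ∀ a, dS a a = 0) (hAr : ∀ a, dA a a = 0) (f : S → A × S) :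
    dState dS dA f f = 0 := by
  simp [dState, hSr, hAr]

theorem dState_stSharp_le {dS : S → S → ℝ≥0∞} {dA : A → A → ℝ≥0∞} {dB : B → B → ℝ≥0∞}
    (hSu : ∀ a b c, dS a c ≤ max (dS a b) (dS b c))
    (hBu : ∀ a b c, dB a c ≤ max (dB a b) (dB b c))
    {F₁ F₂ : A → S → B × S} (f₁ f₂ : S → A × S)
    (hF₂ : ∀ x x' s s', prodMaxDist dB dS (F₂ x s) (F₂ x' s') ≤ max (dA x x') (dS s s')) :
    dState dS dB (stSharp F₁ f₁) (stSharp F₂ f₂) ≤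
      max (dState dS dA f₁ f₂) (⨆ x : A, dState dS dB (F₁ x) (F₂ x)) := by
  refine iSup_le fun s => ?_
  change prodMaxDist dB dS (F₁ (f₁ s).1 (f₁ s).2) (F₂ (f₂ s).1 (f₂ s).2) ≤ _
  set a₁ := (f₁ s).1
  set s₁ := (f₁ s).2
  set a₂ := (f₂ s).1
  set s₂ := (f₂ s).2
  have hF : prodMaxDist dB dS (F₁ a₁ s₁) (F₂ a₁ s₁) ≤ ⨆ x : A, dState dS dB (F₁ x) (F₂ x) :=
    (prodMaxDist_le_dState dS dB (F₁ a₁) (F₂ a₁) s₁).trans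
      (le_iSup (fun x => dState dS dB (F₁ x) (F₂ x)) a₁)
  have hf : prodMaxDist dB dS (F₂ a₁ s₁) (F₂ a₂ s₂) ≤ dState dS dA f₁ f₂ :=
    (hF₂ a₁ a₂ s₁ s₂).trans (prodMaxDist_le_dState dS dA f₁ f₂ s)
  calc prodMaxDist dB dS (F₁ a₁ s₁) (F₂ a₂ s₂)
      ≤ max (prodMaxDist dB dS (F₁ a₁ s₁) (F₂ a₁ s₁))
          (prodMaxDist dB dS (F₂ a₁ s₁) (F₂ a₂ s₂)) := prodMaxDist_le_max hBu hSu _ _ _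
    _ ≤ max (⨆ x : A, dState dS dB (F₁ x) (F₂ x)) (dState dS dA f₁ f₂) := max_le_max hF hf
    _ = max (dState dS dA f₁ f₂) (⨆ x : A, dState dS dB (F₁ x) (F₂ x)) := max_comm _ _

end StateMonad

open StateMonad

theorem dState_eq_unit_reflexive_and_max_composable_general {S I J : Type*}
    (dS : S → S → ℝ≥0∞) (dI : I → I → ℝ≥0∞) (dJ : J → J → ℝ≥0∞)
    (hSr : ∀ a, dS a a = 0) (hIr : ∀ a, dI a a = 0)
    (hSu : ∀ a b c, dS a c ≤ max (dS a b) (dS b c))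
    (hJu : ∀ a b c, dJ a c ≤ max (dJ a b) (dJ b c)) :
    (∀ x : I, dState dS dI (fun s => ((x, s) : I × S)) (fun s => (x, s)) = 0) ∧
    (∀ (F₁ F₂ : I → S → J × S) (f₁ f₂ : S → I × S),
      -- f₁, f₂ nonexpansive
      (∀ s s', max (dI (f₁ s).1 (f₁ s').1) (dS (f₁ s).2 (f₁ s').2) ≤ dS s s') →
      (∀ s s', max (dI (f₂ s).1 (f₂ s').1) (dS (f₂ s).2 (f₂ s').2) ≤ dS s s') →
      -- F₁, F₂ nonexpansive (uncurried form)
      (∀ x x' s s', max (dJ (F₁ x s).1 (F₁ x' s').1) (dS (F₁ x s).2 (F₁ x' s').2) ≤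
        max (dI x x') (dS s s')) →
      (∀ x x' s s', max (dJ (F₂ x s).1 (F₂ x' s').1) (dS (F₂ x s).2 (F₂ x' s').2) ≤
        max (dI x x') (dS s s')) →
      dState dS dJ (stSharp F₁ f₁) (stSharp F₂ f₂) ≤
        max (dState dS dI f₁ f₂) (⨆ x : I, dState dS dJ (F₁ x) (F₂ x))) :=
  ⟨fun _ => dState_self hSr hIr _,
    fun _ _ f₁ f₂ _ _ _ hF₂ => dState_stSharp_le hSu hJu f₁ f₂ hF₂⟩

/-- On the state monad over generalized `[0,1]`-valued ultrametric spaces, the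
sup-max metrics form an `Eq`-relative divergence with divergence domain
`([0,1], ≤, 0, max)`. -/
theorem dState_eq_unit_reflexive_and_max_composable {S I J : Type*}
    (dS : S → S → ℝ≥0∞) (dI : I → I → ℝ≥0∞) (dJ : J → J → ℝ≥0∞)
    (hS1 : ∀ a b, dS a b ≤ 1) (hI1 : ∀ a b, dI a b ≤ 1) (hJ1 : ∀ a b, dJ a b ≤ 1)
    (hSr : ∀ a, dS a a = 0) (hIr : ∀ a, dI a a = 0) (hJr : ∀ a, dJ a a = 0)
    (hSu : ∀ a b c, dS a c ≤ max (dS a b) (dS b c))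
    (hIu : ∀ a b c, dI a c ≤ max (dI a b) (dI b c))
    (hJu : ∀ a b c, dJ a c ≤ max (dJ a b) (dJ b c)) :
    (∀ x : I, dState dS dI (fun s => ((x, s) : I × S)) (fun s => (x, s)) = 0) ∧
    (∀ (F₁ F₂ : I → S → J × S) (f₁ f₂ : S → I × S),
      -- f₁, f₂ nonexpansive
      (∀ s s', max (dI (f₁ s).1 (f₁ s').1) (dS (f₁ s).2 (f₁ s').2) ≤ dS s s') →
      (∀ s s', max (dI (f₂ s).1 (f₂ s').1) (dS (f₂ s).2 (f₂ s').2) ≤ dS s s') →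
      -- F₁, F₂ nonexpansive (uncurried form)
      (∀ x x' s s', max (dJ (F₁ x s).1 (F₁ x' s').1) (dS (F₁ x s).2 (F₁ x' s').2) ≤
        max (dI x x') (dS s s')) →
      (∀ x x' s s', max (dJ (F₂ x s).1 (F₂ x' s').1) (dS (F₂ x s).2 (F₂ x' s').2) ≤
        max (dI x x') (dS s s')) →
      dState dS dJ (stSharp F₁ f₁) (stSharp F₂ f₂) ≤
        max (dState dS dI f₁ f₂) (⨆ x : I, dState dS dJ (F₁ x) (F₂ x))) :=
  dState_eq_unit_reflexive_and_max_composable_general dS dI dJ hSr hIr hSu hJu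
end
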